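/- Let a and b be positive integers and let μ ∈ R(a,b) have frontier w_1 w_2…w_{a+b} with levels l_0, l_1, …, l_{a+b}. If w_1 = E, then h⁺_{b,a}(C(μ)) − h⁺_{b,a}(μ) = −#{j ∈ {1,…,a+b} : w_j = N and 1 ≤ −l_{j−1} ≤ a+b} = −#{k ∈ {1,…,a+b} : 1 ≤ −l_{k−1} ≤ a}. -/

import Mathlib

/-- `μ : ℕ → ℕ` represents a partition in `R(a,b)`: the value `μ i` is the
`(i+1)`-th part; the parts are weakly decreasing, at most `b`, and zero from
index `a` on (so the Young diagram of `μ` fits in an `a × b` box). -/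
def InBox (a b : ℕ) (μ : ℕ → ℕ) : Prop :=
  (∀ i j : ℕ, i ≤ j → μ j ≤ μ i) ∧ μ 0 ≤ b ∧ ∀ i, a ≤ i → μ i = 0

/-- `μ ∈ D(a,b)`: `μ ∈ R(a,b)` and `a·μ_j ≤ b·(a−j)` for all (1-indexed) `j`;
in terms of the 0-indexed parts this reads `a·μ(i) ≤ b·(a−1−i)`. -/
def InTriangle (a b : ℕ) (μ : ℕ → ℕ) : Prop :=
  InBox a b μ ∧ ∀ i, i < a → a * μ i ≤ b * (a - 1 - i)

/-- The leg of the cell in (0-indexed) row `i`, column `j` of the Young diagram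
of `μ`: the number of cells strictly below it in its column. -/
noncomputable def leg (μ : ℕ → ℕ) (i j : ℕ) : ℕ :=
  {i' : ℕ | i < i' ∧ j < μ i'}.ncard

/-- The arm of the cell in row `i`, column `j` (as an integer): the number of
cells strictly to its right in its row. -/
def armZ (μ : ℕ → ℕ) (i j : ℕ) : ℤ := (μ i : ℤ) - 1 - j

/-- `h⁺_{b,a}(μ)`: the number of cells `c` of `μ` with
`−a < a·arm(c) − b·leg(c) ≤ b`. -/
noncomputable def hplus (a b : ℕ) (μ : ℕ → ℕ) : ℕ :=
  {c : ℕ × ℕ | c.2 < μ c.1 ∧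
    -(a : ℤ) < (a : ℤ) * armZ μ c.1 c.2 - (b : ℤ) * leg μ c.1 c.2 ∧
    (a : ℤ) * armZ μ c.1 c.2 - (b : ℤ) * leg μ c.1 c.2 ≤ (b : ℤ)}.ncard

/-- The frontier of `μ ∈ R(a,b)`: the lattice word from `(0,0)` to `(b,a)`
(`true` = N, `false` = E) tracing the boundary of the diagram of `μ` inside the
`a × b` box; its `j`-th N (from the start) is preceded by exactly `μ_{a+1−j}` E's. -/
def frontierWord (a b : ℕ) (μ : ℕ → ℕ) : List Bool :=
  ((List.range a).flatMap fun y =>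
    List.replicate (μ (a - 1 - y) - μ (a - y)) false ++ [true]) ++
  List.replicate (b - μ 0) false

/-- The level `l_i = b·(#N) − a·(#E)` of the lattice point reached after the
first `i` steps of the word `w` (with `true` = N, `false` = E). -/
def levelAt (a b : ℕ) (w : List Bool) (i : ℕ) : ℤ :=
  (b : ℤ) * (w.take i).count true - (a : ℤ) * (w.take i).count false

/-- `ml_{b,a}`: the minimum of the levels `l_0, l_1, …, l_{length w}` along `w`. -/
def minLevel (a b : ℕ) (w : List Bool) : ℤ :=
  ((Finset.range (w.length + 1)).image fun i => levelAt a b w i).min'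
    (Finset.Nonempty.image Finset.nonempty_range_add_one _)

/-!
Since the frontier starts with an E step, every row of `μ` is nonempty and `C(μ)` is `μ` with
its first column removed. Cells off the first column keep their arms and legs, so `h⁺` drops by
the number of first-column cells `c` with `−a < a·arm(c) − b·leg(c) ≤ b`. The first-column cell
of a row corresponds to the N step of that row, and `a·arm − b·leg = −l − a` for the level `l`
before that step, which gives the first count. For the second, compare the two counts step by
step: an N step counted only in the first starts at a level in `[−a−b, −a)` and so crosses `−a`
upwards, an E step counted only in the second starts in `[−a, −1]` and crosses `−a` downwards.
The path starts and ends at level `0`, so the upward and downward crossings balance.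
-/

open List

theorem frontierWord_zero (b : ℕ) (μ : ℕ → ℕ) :
    frontierWord 0 b μ = replicate (b - μ 0) false := by
  simp [frontierWord]

-- The frontier starts with the bottom row, so induction on `a` peels off row `a`; this is why
-- the lemmas below are stated for an antitone `μ` with arbitrary `μ a`.
theorem frontierWord_succ (a b : ℕ) (μ : ℕ → ℕ) :
    frontierWord (a + 1) b μ = replicate (μ a - μ (a + 1)) false ++ true :: frontierWord a b μ := by
  have hblock : (fun y => replicate (μ (a + 1 - 1 - y.succ) - μ (a + 1 - y.succ)) false ++ [true]) =
      fun y => replicate (μ (a - 1 - y) - μ (a - y)) false ++ [true] := by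
    funext y
    congr 4 <;> omega
  rw [frontierWord, frontierWord, range_succ_eq_map, flatMap_cons, flatMap_map, hblock]
  simp

theorem replicate_false_append_true_inj {x y : ℕ} {u v : List Bool}
    (h : replicate x false ++ true :: u = replicate y false ++ true :: v) : x = y ∧ u = v := by
  have hidx : ∀ n (l : List Bool), (replicate n false ++ true :: l).idxOf true = n := fun n l => by
    rw [idxOf_append_of_notMem (by simp [mem_replicate]), idxOf_cons_self, length_replicate]
    rfl
  obtain rfl : x = y := by rw [← hidx x u, h, hidx]
  simpa using h

theorem count_true_frontierWord (a b : ℕ) (μ : ℕ → ℕ) : (frontierWord a b μ).count true = a := by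
  induction a with
  | zero => simp [frontierWord_zero, count_replicate]
  | succ a ih => simp [frontierWord_succ, count_replicate, ih]

theorem count_false_frontierWord {a b : ℕ} {μ : ℕ → ℕ} (hμ : Antitone μ) (hb : μ 0 ≤ b) :
    (frontierWord a b μ).count false = b - μ a := by
  induction a with
  | zero => simp [frontierWord_zero]
  | succ a ih =>
    have h1 := hμ (Nat.le_add_right a 1)
    have h2 := hμ (Nat.zero_le a)
    simp [frontierWord_succ, ih]
    omega

theorem frontierWord_eq_append_true_append {a b : ℕ} {μ : ℕ → ℕ} (hμ : Antitone μ) {i : ℕ}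
    (hi : i < a) : ∃ u v, frontierWord a b μ = u ++ true :: v ∧
      u.count true = a - 1 - i ∧ u.count false = μ i - μ a := by
  induction a with
  | zero => omega
  | succ a ih =>
    rcases Nat.lt_succ_iff_lt_or_eq.mp hi with hi | rfl
    · obtain ⟨u, v, huv, ht, hf⟩ := ih hi
      have h1 := hμ (Nat.le_add_right a 1)
      have h2 := hμ hi.le
      refine ⟨replicate (μ a - μ (a + 1)) false ++ true :: u, v, ?_, ?_, ?_⟩
      · simp [frontierWord_succ, huv]
      · simp [count_replicate, ht]; omega
      · simp [hf]; omega
    · exact ⟨_, _, frontierWord_succ i b μ, by simp [count_replicate], by simp⟩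

theorem exists_eq_of_getElem?_frontierWord_eq_true {a b : ℕ} {μ : ℕ → ℕ} (hμ : Antitone μ)
    {p : ℕ} (h : (frontierWord a b μ)[p]? = some true) :
    ∃ i < a, p = μ i - μ a + (a - 1 - i) := by
  induction a generalizing p with
  | zero => simp [frontierWord_zero, getElem?_replicate] at h
  | succ a ih =>
    rw [frontierWord_succ] at h
    rcases lt_trichotomy p (μ a - μ (a + 1)) with hp | hp | hp
    · simp [getElem?_append_left, hp] at h
    · exact ⟨a, by omega, by simp [hp]⟩
    · obtain ⟨q, rfl⟩ : ∃ q, p = μ a - μ (a + 1) + 1 + q := ⟨p - (μ a - μ (a + 1)) - 1, by omega⟩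
      rw [getElem?_append_right (by simp; omega)] at h
      have hq : μ a - μ (a + 1) + 1 + q - (μ a - μ (a + 1)) = q + 1 := by omega
      obtain ⟨i, hi, rfl⟩ := ih (p := q) (by simpa [hq] using h)
      have h1 := hμ (Nat.le_add_right a 1)
      have h2 := hμ hi.le
      exact ⟨i, by omega, by omega⟩

theorem frontierWord_north_step {a b : ℕ} {μ : ℕ → ℕ} (hμ : Antitone μ) {i : ℕ} (hi : i < a) :
    (frontierWord a b μ)[μ i - μ a + (a - 1 - i)]? = some true ∧
      levelAt a b (frontierWord a b μ) (μ i - μ a + (a - 1 - i)) =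
        b * (a - 1 - i : ℕ) - a * (μ i - μ a : ℕ) := by
  obtain ⟨u, v, huv, ht, hf⟩ := frontierWord_eq_append_true_append (b := b) hμ hi
  have hlen : u.length = μ i - μ a + (a - 1 - i) := by
    rw [← count_not_add_count u true, Bool.not_true, ht, hf]
  rw [← hlen, huv, levelAt, take_left' rfl, ht, hf]
  simp

theorem length_frontierWord {a b : ℕ} {μ : ℕ → ℕ} (hμ : InBox a b μ) :
    (frontierWord a b μ).length = a + b := by
  rw [← count_not_add_count _ true, Bool.not_true, count_true_frontierWord,
    count_false_frontierWord hμ.1 hμ.2.1, hμ.2.2 a le_rfl]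
  omega

theorem levelAt_length_frontierWord {a b : ℕ} {μ : ℕ → ℕ} (hμ : InBox a b μ) :
    levelAt a b (frontierWord a b μ) (frontierWord a b μ).length = 0 := by
  rw [levelAt, take_length, count_true_frontierWord, count_false_frontierWord hμ.1 hμ.2.1,
    hμ.2.2 a le_rfl, Nat.sub_zero]
  ring

theorem levelAt_succ {a b : ℕ} {w : List Bool} {p : ℕ} {c : Bool} (h : w[p]? = some c) :
    levelAt a b w (p + 1) = levelAt a b w p + if c then (b : ℤ) else -(a : ℤ) := by
  rw [levelAt, levelAt, take_add_one, h]
  cases c <;> simp [count_append] <;> ring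

theorem eq_of_frontierWord_eq {a b : ℕ} {μ ν : ℕ → ℕ} (hμ : Antitone μ) (hν : Antitone ν)
    (h : frontierWord a b μ = frontierWord a b ν) (ha : μ a = ν a) : ∀ i ≤ a, μ i = ν i := by
  induction a with
  | zero => simpa using ha
  | succ a ih =>
    rw [frontierWord_succ, frontierWord_succ] at h
    obtain ⟨hlast, hrest⟩ := replicate_false_append_true_inj h
    have h1 := hμ (Nat.le_add_right a 1)
    have h2 := hν (Nat.le_add_right a 1)
    intro i hi
    rcases Nat.of_le_succ hi with hi | rfl
    · exact ih hrest (by omega) i hi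
    · exact ha

theorem frontierWord_injOn (a b : ℕ) : Set.InjOn (frontierWord a b) {μ | InBox a b μ} := by
  intro μ hμ ν hν h
  funext i
  rcases lt_or_ge i a with hi | hi
  · exact eq_of_frontierWord_eq hμ.1 hν.1 h (by rw [hμ.2.2 a le_rfl, hν.2.2 a le_rfl]) i hi.le
  · rw [hμ.2.2 i hi, hν.2.2 i hi]

theorem InBox.sub_one {a b : ℕ} {μ : ℕ → ℕ} (hμ : InBox a b μ) : InBox a b (fun i => μ i - 1) :=
  ⟨fun _ _ hij => Nat.sub_le_sub_right (hμ.1 _ _ hij) 1, (Nat.sub_le _ _).trans hμ.2.1,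
    fun i hi => by simp [hμ.2.2 i hi]⟩

theorem frontierWord_sub_one_of_pos {a b : ℕ} {μ : ℕ → ℕ} (hpos : ∀ i ≤ a, 0 < μ i)
    (hb : μ 0 ≤ b) : frontierWord a b (fun i => μ i - 1) = frontierWord a b μ ++ [false] := by
  induction a with
  | zero =>
    have h0 := hpos 0 le_rfl
    rw [frontierWord_zero, frontierWord_zero, ← replicate_succ']
    congr 1
    omega
  | succ a ih =>
    have h1 := hpos (a + 1) le_rfl
    rw [frontierWord_succ, frontierWord_succ, ih fun i hi => hpos i (by omega)]
    simp only [append_assoc, cons_append]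
    congr 2
    omega

theorem frontierWord_sub_one_eq_rotate {a b : ℕ} {μ : ℕ → ℕ} (hμ : InBox a b μ)
    (hpos : ∀ i < a, 0 < μ i) :
    frontierWord a b (fun i => μ i - 1) = (frontierWord a b μ).rotate 1 := by
  cases a with
  | zero => simp [frontierWord_zero, rotate_replicate, hμ.2.2 0 le_rfl]
  | succ a =>
    have hlast := hpos a (by omega)
    have hzero := hμ.2.2 (a + 1) le_rfl
    rw [frontierWord_succ, frontierWord_succ,
      frontierWord_sub_one_of_pos (fun i hi => hpos i (by omega)) hμ.2.1, hzero,
      show μ a - 0 = (μ a - 1 - 0) + 1 by omega, replicate_succ, cons_append, rotate_cons_succ,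
      rotate_zero]
    simp

theorem pos_of_getElem?_frontierWord_zero_eq_false {a b : ℕ} {μ : ℕ → ℕ} (hμ : InBox a b μ)
    (h : (frontierWord a b μ)[0]? = some false) : ∀ i < a, 0 < μ i := by
  intro i hi
  obtain ⟨a, rfl⟩ : ∃ a', a = a' + 1 := ⟨a - 1, by omega⟩
  have hlast : 0 < μ a := by
    by_contra h0
    rw [frontierWord_succ, hμ.2.2 (a + 1) le_rfl, show μ a = 0 by omega] at h
    simp at h
  exact hlast.trans_le (hμ.1 i a (by omega))

def IsHPlusCell (a b : ℕ) (μ : ℕ → ℕ) (c : ℕ × ℕ) : Prop :=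
  c.2 < μ c.1 ∧ -(a : ℤ) < a * armZ μ c.1 c.2 - b * leg μ c.1 c.2 ∧
    a * armZ μ c.1 c.2 - b * leg μ c.1 c.2 ≤ b

theorem hplus_eq_ncard (a b : ℕ) (μ : ℕ → ℕ) : hplus a b μ = {c | IsHPlusCell a b μ c}.ncard :=
  rfl

theorem leg_sub_one (μ : ℕ → ℕ) (i j : ℕ) : leg (fun i => μ i - 1) i j = leg μ i (j + 1) := by
  simp only [leg, Nat.lt_sub_iff_add_lt]

theorem isHPlusCell_sub_one_iff {a b : ℕ} {μ : ℕ → ℕ} {i j : ℕ} :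
    IsHPlusCell a b (fun i => μ i - 1) (i, j) ↔ IsHPlusCell a b μ (i, j + 1) := by
  simp only [IsHPlusCell, leg_sub_one, armZ]
  constructor <;> rintro ⟨hj, hlo, hhi⟩ <;>
    rw [Nat.cast_sub (show 1 ≤ μ i by omega)] at * <;> push_cast at * <;>
    exact ⟨by omega, by linarith, by linarith⟩

theorem leg_zero_of_pos {a : ℕ} {μ : ℕ → ℕ} (hpos : ∀ i < a, 0 < μ i)
    (hzero : ∀ i, a ≤ i → μ i = 0) {i : ℕ} (hi : i < a) : leg μ i 0 = a - 1 - i := by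
  have hcol : {i' | i < i' ∧ 0 < μ i'} = Set.Ioo i a := by
    ext i'
    simp only [Set.mem_ofPred_eq, Set.mem_Ioo]
    refine and_congr_right fun _ => ⟨fun h => ?_, hpos i'⟩
    by_contra hge
    rw [hzero i' (not_lt.mp hge)] at h
    exact h.false
  rw [leg, hcol, ← Finset.coe_Ioo, Set.ncard_coe_finset, Nat.card_Ioo]
  omega

-- For a nonempty first cell of row `i` (arm `μ i - 1`, leg `a - 1 - i`) the condition
-- `-a < a·arm - b·leg ≤ b`, shifted by `a`.
def firstColumnRows (a b : ℕ) (μ : ℕ → ℕ) : Finset ℕ :=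
  (Finset.range a).filter fun i =>
    1 ≤ (a : ℤ) * μ i - b * (a - 1 - i : ℕ) ∧ (a : ℤ) * μ i - b * (a - 1 - i : ℕ) ≤ a + b

theorem isHPlusCell_zero_iff {a b : ℕ} {μ : ℕ → ℕ} (hpos : ∀ i < a, 0 < μ i)
    (hzero : ∀ i, a ≤ i → μ i = 0) {i : ℕ} :
    IsHPlusCell a b μ (i, 0) ↔ i ∈ firstColumnRows a b μ := by
  rw [firstColumnRows, Finset.mem_filter, Finset.mem_range]
  refine ⟨fun hc => ?_, fun ⟨hi, hlo, hhi⟩ => ?_⟩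
  · have hi : i < a := by
      by_contra hge
      have := hc.1
      simp [hzero i (not_lt.mp hge)] at this
    obtain ⟨-, hlo, hhi⟩ := hc
    simp only [armZ, leg_zero_of_pos hpos hzero hi] at hlo hhi
    push_cast at hlo hhi
    exact ⟨hi, by linarith, by linarith⟩
  · refine ⟨hpos i hi, ?_, ?_⟩ <;> simp only [armZ, leg_zero_of_pos hpos hzero hi] <;>
      push_cast <;> linarith

theorem hplus_eq_hplus_sub_one_add_card {a b : ℕ} {μ : ℕ → ℕ} (hμ : InBox a b μ)
    (hpos : ∀ i < a, 0 < μ i) :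
    hplus a b μ = hplus a b (fun i => μ i - 1) + (firstColumnRows a b μ).card := by
  obtain ⟨hanti, hb, hzero⟩ := hμ
  set S := {c | IsHPlusCell a b μ c}
  have hfin : S.Finite := by
    refine ((Set.finite_Iio a).prod (Set.finite_Iio b)).subset fun ⟨i, j⟩ hc => ?_
    have hj : j < μ i := hc.1
    have hi : i < a := by
      by_contra hge
      simp [hzero i (not_lt.mp hge)] at hj
    exact ⟨hi, hj.trans_le ((hanti 0 i (Nat.zero_le i)).trans hb)⟩
  have hcol : S ∩ {c | c.2 = 0} = (fun i => (i, 0)) '' (firstColumnRows a b μ : Set ℕ) := by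
    ext ⟨i, j⟩
    simp only [S, Set.mem_inter_iff, Set.mem_ofPred_eq, Set.mem_image, Finset.mem_coe,
      ← isHPlusCell_zero_iff hpos hzero, Prod.mk.injEq]
    constructor
    · rintro ⟨hc, rfl⟩
      exact ⟨i, hc, rfl, rfl⟩
    · rintro ⟨i, hc, rfl, rfl⟩
      exact ⟨hc, rfl⟩
  have hrest : S \ {c | c.2 = 0} =
      (fun c => (c.1, c.2 + 1)) '' {c | IsHPlusCell a b (fun i => μ i - 1) c} := by
    ext ⟨i, j⟩
    cases j <;> simp [S, isHPlusCell_sub_one_iff]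
  have hshift : Function.Injective fun c : ℕ × ℕ => (c.1, c.2 + 1) := fun c d h => by
    simpa [Prod.ext_iff] using h
  rw [hplus_eq_ncard, hplus_eq_ncard,
    ← Set.ncard_inter_add_ncard_sdiff_eq_ncard S {c | c.2 = 0} hfin, hcol, hrest,
    Set.ncard_image_of_injective _ (fun _ _ h => (Prod.mk.inj h).1),
    Set.ncard_image_of_injective _ hshift, Set.ncard_coe_finset, add_comm]

theorem card_north_steps_eq_card_levels {a b : ℕ} {w : List Bool}
    (hend : levelAt a b w w.length = 0) :
    ((Finset.range w.length).filter fun p => w[p]? = some true ∧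
        1 ≤ -levelAt a b w p ∧ -levelAt a b w p ≤ (a : ℤ) + b).card =
      ((Finset.range w.length).filter fun p =>
        1 ≤ -levelAt a b w p ∧ -levelAt a b w p ≤ (a : ℤ)).card := by
  let below (p : ℕ) : ℤ := if levelAt a b w p < -a then 1 else 0
  have hstep : ∀ p ∈ Finset.range w.length,
      ((if w[p]? = some true ∧ 1 ≤ -levelAt a b w p ∧ -levelAt a b w p ≤ (a : ℤ) + b
          then 1 else 0 : ℤ) -
        if 1 ≤ -levelAt a b w p ∧ -levelAt a b w p ≤ (a : ℤ) then 1 else 0) =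
        below p - below (p + 1) := by
    intro p hp
    obtain ⟨c, hc⟩ : ∃ c, w[p]? = some c := ⟨_, getElem?_eq_getElem (Finset.mem_range.mp hp)⟩
    simp only [below, levelAt_succ hc, hc]
    cases c <;> simp only [Option.some.injEq, Bool.false_eq_true, false_and, true_and,
      if_true, if_false] <;> split_ifs <;> omega
  have hsum := Finset.sum_congr rfl hstep
  rw [Finset.sum_sub_distrib, Finset.sum_boole, Finset.sum_boole, Finset.sum_range_sub'] at hsum
  have hbelow_zero : below 0 = 0 := by simp [below, levelAt]
  have hbelow_end : below w.length = 0 := by simp [below, hend]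
  rw [hbelow_zero, hbelow_end, sub_zero, sub_eq_zero] at hsum
  exact_mod_cast hsum

theorem ncard_setOf_pred_sub_one_eq_card_filter (n : ℕ) (P : ℕ → Prop) [DecidablePred P] :
    {j : ℕ | 1 ≤ j ∧ j ≤ n ∧ P (j - 1)}.ncard = ((Finset.range n).filter P).card := by
  have himage : {j : ℕ | 1 ≤ j ∧ j ≤ n ∧ P (j - 1)} =
      (· + 1) '' ((Finset.range n).filter P : Set ℕ) := by
    ext j
    simp only [Set.mem_ofPred_eq, Set.mem_image, Finset.coe_filter, Finset.mem_range]
    constructor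
    · rintro ⟨h1, hn, hP⟩
      exact ⟨j - 1, ⟨by omega, hP⟩, by omega⟩
    · rintro ⟨p, ⟨hp, hP⟩, rfl⟩
      exact ⟨by omega, by omega, hP⟩
  rw [himage, Set.ncard_image_of_injective _ (add_left_injective 1), Set.ncard_coe_finset]

theorem card_firstColumnRows {a b : ℕ} {μ : ℕ → ℕ} (hμ : InBox a b μ) :
    (firstColumnRows a b μ).card = ((Finset.range (a + b)).filter fun p =>
      (frontierWord a b μ)[p]? = some true ∧ 1 ≤ -levelAt a b (frontierWord a b μ) p ∧
        -levelAt a b (frontierWord a b μ) p ≤ (a : ℤ) + b).card := by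
  obtain ⟨hanti, hb, hzero⟩ := hμ
  have hnorth (i : ℕ) (hi : i < a) := frontierWord_north_step (b := b) hanti hi
  simp only [hzero a le_rfl, Nat.sub_zero] at hnorth
  rw [← Finset.card_image_of_injOn (f := fun i => μ i + (a - 1 - i))]
  · congr 1
    ext p
    simp only [firstColumnRows, Finset.mem_image, Finset.mem_filter, Finset.mem_range]
    constructor
    · rintro ⟨i, ⟨hi, hlo, hhi⟩, rfl⟩
      have := hanti 0 i (Nat.zero_le i)
      obtain ⟨htrue, hlevel⟩ := hnorth i hi
      exact ⟨by omega, htrue, by linarith, by linarith⟩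
    · rintro ⟨-, htrue, hlo, hhi⟩
      obtain ⟨i, hi, hp⟩ := exists_eq_of_getElem?_frontierWord_eq_true hanti htrue
      rw [hzero a le_rfl, Nat.sub_zero] at hp
      subst hp
      obtain ⟨-, hlevel⟩ := hnorth i hi
      exact ⟨i, ⟨hi, by linarith, by linarith⟩, rfl⟩
  · intro i hi j hj hij
    have hi : i < a := (Finset.mem_filter.mp hi).1 |> Finset.mem_range.mp
    have hj : j < a := (Finset.mem_filter.mp hj).1 |> Finset.mem_range.mp
    simp only at hij
    rcases le_total i j with hle | hle
    · have := hanti i j hle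
      omega
    · have := hanti j i hle
      omega

theorem stmt12_general (a b : ℕ)
    (μ ν : ℕ → ℕ) (hμ : InBox a b μ) (hν : InBox a b ν)
    (hC : frontierWord a b ν = (frontierWord a b μ).rotate 1)
    (hw1 : (frontierWord a b μ)[0]? = some false) :
    ((hplus a b ν : ℤ) - (hplus a b μ : ℤ) =
      -({j : ℕ | 1 ≤ j ∧ j ≤ a + b ∧
        (frontierWord a b μ)[j - 1]? = some true ∧
        1 ≤ -levelAt a b (frontierWord a b μ) (j - 1) ∧
        -levelAt a b (frontierWord a b μ) (j - 1) ≤ (a : ℤ) + b}.ncard : ℤ)) ∧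
    ((hplus a b ν : ℤ) - (hplus a b μ : ℤ) =
      -({k : ℕ | 1 ≤ k ∧ k ≤ a + b ∧
        1 ≤ -levelAt a b (frontierWord a b μ) (k - 1) ∧
        -levelAt a b (frontierWord a b μ) (k - 1) ≤ (a : ℤ)}.ncard : ℤ)) := by
  have hpos := pos_of_getElem?_frontierWord_zero_eq_false hμ hw1
  have hν_eq : ν = fun i => μ i - 1 :=
    frontierWord_injOn a b hν hμ.sub_one (hC.trans (frontierWord_sub_one_eq_rotate hμ hpos).symm)
  have hlevels := card_north_steps_eq_card_levels (levelAt_length_frontierWord hμ)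
  rw [length_frontierWord hμ] at hlevels
  rw [ncard_setOf_pred_sub_one_eq_card_filter (a + b)
      (fun p => (frontierWord a b μ)[p]? = some true ∧ 1 ≤ -levelAt a b (frontierWord a b μ) p ∧
        -levelAt a b (frontierWord a b μ) p ≤ (a : ℤ) + b),
    ncard_setOf_pred_sub_one_eq_card_filter (a + b)
      (fun p => 1 ≤ -levelAt a b (frontierWord a b μ) p ∧
        -levelAt a b (frontierWord a b μ) p ≤ (a : ℤ)),
    ← hlevels, ← card_firstColumnRows hμ, hplus_eq_hplus_sub_one_add_card hμ hpos, hν_eq]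
  push_cast
  constructor <;> ring

/-- let `μ ∈ R(a,b)` have frontier `w = w_1 ⋯ w_{a+b}` with levels
`l_0, …, l_{a+b}`, and let `ν = C(μ)` be the (unique) partition in `R(a,b)` whose
frontier is the cyclic shift `w_2 ⋯ w_{a+b} w_1`.  If `w_1 = E`, then
`h⁺_{b,a}(C(μ)) − h⁺_{b,a}(μ)` equals minus the number of `j ∈ {1,…,a+b}` with
`w_j = N` and `1 ≤ −l_{j−1} ≤ a+b`, which also equals minus the number of
`k ∈ {1,…,a+b}` with `1 ≤ −l_{k−1} ≤ a`. -/
theorem stmt12 (a b : ℕ) (ha : 0 < a) (hb : 0 < b)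
    (μ ν : ℕ → ℕ) (hμ : InBox a b μ) (hν : InBox a b ν)
    (hC : frontierWord a b ν = (frontierWord a b μ).rotate 1)
    (hw1 : (frontierWord a b μ)[0]? = some false) :
    ((hplus a b ν : ℤ) - (hplus a b μ : ℤ) =
      -({j : ℕ | 1 ≤ j ∧ j ≤ a + b ∧
        (frontierWord a b μ)[j - 1]? = some true ∧
        1 ≤ -levelAt a b (frontierWord a b μ) (j - 1) ∧
        -levelAt a b (frontierWord a b μ) (j - 1) ≤ (a : ℤ) + b}.ncard : ℤ)) ∧
    ((hplus a b ν : ℤ) - (hplus a b μ : ℤ) =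
      -({k : ℕ | 1 ≤ k ∧ k ≤ a + b ∧
        1 ≤ -levelAt a b (frontierWord a b μ) (k - 1) ∧
        -levelAt a b (frontierWord a b μ) (k - 1) ≤ (a : ℤ)}.ncard : ℤ)) :=
  stmt12_general a b μ ν hμ hν hC hw1
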